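/- arXiv:1404.4997 — 8 statements merged into one kernel-verified Lean document; each statement's English description precedes it below -/
import Mathlib

section
/- Let p(x) be a monic univariate real polynomial of degree d ≥ 1. Then for any ε > 0, the probability under a standard Gaussian x ~ N(0,1) that |p(x)| < ε is less than d·ε^{1/d}. -/
/-!
Over `ℂ`, `p(x) = ∏ᵢ (x - zᵢ)`, so `|p(x)| < ε` forces `|x - Re zᵢ| ≤ |x - zᵢ| < ε^{1/d}` for
some root `zᵢ`. The sublevel set is therefore covered by at most `d` intervals of length
`2ε^{1/d}`, and since the standard Gaussian density is at most `1/√(2π)`, each interval has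
mass at most `2ε^{1/d}/√(2π) < ε^{1/d}`.
-/

open MeasureTheory ProbabilityTheory Polynomial

namespace Polynomial

theorem Monic.exists_mem_roots_norm_sub_lt {K : Type*} [NormedField K] {p : K[X]}
    (hm : p.Monic) (hs : p.Splits) {t : ℝ} (ht : 0 ≤ t) (x : K)
    (hx : ‖p.eval x‖ < t ^ p.natDegree) : ∃ z ∈ p.roots, ‖x - z‖ < t := by
  by_contra! hfar
  have : t ^ p.natDegree ≤ ‖p.eval x‖ :=
    calc t ^ p.natDegree = (p.roots.map fun _ ↦ t).prod := by
          rw [Multiset.map_const', Multiset.prod_replicate, hs.natDegree_eq_card_roots]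
      _ ≤ (p.roots.map fun z ↦ ‖x - z‖).prod :=
          Multiset.prod_map_le_prod_map₀ _ _ (fun _ _ ↦ ht) hfar
      _ = ‖p.eval x‖ := by
          rw [hs.eval_eq_prod_roots_of_monic hm, ← normHom_apply, map_multiset_prod,
            Multiset.map_map]
          rfl
  exact this.not_gt hx

theorem Monic.setOf_abs_eval_lt_subset_iUnion_ball {p : ℝ[X]} (hm : p.Monic) {t : ℝ}
    (ht : 0 ≤ t) :
    {x : ℝ | |p.eval x| < t ^ p.natDegree} ⊆
      ⋃ z ∈ (p.aroots ℂ).toFinset, Metric.ball z.re t := by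
  intro x hx
  have hmC : (p.map (algebraMap ℝ ℂ)).Monic := hm.map _
  have hxC : ‖(p.map (algebraMap ℝ ℂ)).eval (x : ℂ)‖ = |p.eval x| := by
    rw [eval_map_algebraMap, ← Complex.coe_algebraMap, aeval_algebraMap_apply_eq_algebraMap_eval,
      Complex.coe_algebraMap, Complex.norm_real, Real.norm_eq_abs]
  obtain ⟨z, hz, hxz⟩ := hmC.exists_mem_roots_norm_sub_lt (IsAlgClosed.splits _) ht x
    (by rwa [hxC, Polynomial.natDegree_map])
  refine Set.mem_biUnion (Multiset.mem_toFinset.mpr hz) ?_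
  calc dist x z.re = |((x : ℂ) - z).re| := by simp [Real.dist_eq]
    _ ≤ ‖(x : ℂ) - z‖ := Complex.abs_re_le_norm _
    _ < t := hxz

end Polynomial

namespace ProbabilityTheory

open Real

lemma gaussianPDFReal_le (μ : ℝ) (v : NNReal) (x : ℝ) :
    gaussianPDFReal μ v x ≤ (√(2 * π * v))⁻¹ := by
  rw [gaussianPDFReal]
  refine mul_le_of_le_one_right (by positivity) (exp_le_one_iff.mpr ?_)
  exact div_nonpos_of_nonpos_of_nonneg (neg_nonpos.mpr (sq_nonneg _)) (by positivity)

lemma gaussianReal_le_smul_volume (μ : ℝ) {v : NNReal} (hv : v ≠ 0) :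
    gaussianReal μ v ≤ ENNReal.ofReal (√(2 * π * v))⁻¹ • volume := by
  rw [gaussianReal_of_var_ne_zero μ hv, ← withDensity_const]
  exact withDensity_mono <| ae_of_all _ fun x ↦
    ENNReal.ofReal_le_ofReal (gaussianPDFReal_le μ v x)

lemma measureReal_gaussianReal_ball_le (μ : ℝ) {v : NNReal} (hv : v ≠ 0) (a : ℝ) {r : ℝ}
    (hr : 0 ≤ r) : (gaussianReal μ v).real (Metric.ball a r) ≤ 2 * r / √(2 * π * v) := by
  have h := gaussianReal_le_smul_volume μ hv (Metric.ball a r)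
  rw [Measure.smul_apply, Real.volume_ball, smul_eq_mul,
    ← ENNReal.ofReal_mul (by positivity)] at h
  rw [div_eq_inv_mul]
  exact ENNReal.toReal_le_of_le_ofReal (by positivity) h

end ProbabilityTheory

lemma two_div_sqrt_two_mul_pi_lt_one : 2 / √(2 * Real.pi) < 1 := by
  rw [div_lt_one (by positivity), Real.lt_sqrt zero_le_two]
  nlinarith [Real.pi_gt_three]

/-- Anticoncentration of a monic univariate polynomial of degree `d ≥ 1` under a
standard Gaussian: `Pr_{x ∼ N(0,1)}[|p(x)| < ε] < d·ε^{1/d}`. -/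
theorem gaussian_anticoncentration_univariate
    (p : Polynomial ℝ) (hmonic : p.Monic) (d : ℕ) (hd : 1 ≤ d)
    (hdeg : p.natDegree = d) (ε : ℝ) (hε : 0 < ε) :
    ((gaussianReal 0 1) {x : ℝ | |p.eval x| < ε}).toReal
      < (d : ℝ) * ε ^ ((1 : ℝ) / d) := by
  set t := ε ^ ((1 : ℝ) / d)
  have ht : 0 < t := Real.rpow_pos_of_pos hε _
  have htd : t ^ d = ε := by
    rw [← Real.rpow_natCast, ← Real.rpow_mul hε.le, one_div_mul_cancel (by positivity),
      Real.rpow_one]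
  set roots := (p.aroots ℂ).toFinset
  have hcard : (roots.card : ℝ) ≤ d := by
    rw [← hdeg, ← IsAlgClosed.card_aroots_eq_natDegree_of_leadingCoeff_ne_zero (B := ℂ)
      (by simp [hmonic])]
    exact_mod_cast Multiset.toFinset_card_le _
  have hball : ∀ z ∈ roots,
      (gaussianReal 0 1).real (Metric.ball z.re t) ≤ 2 * t / √(2 * Real.pi) :=
    fun z _ ↦ by simpa using measureReal_gaussianReal_ball_le 0 one_ne_zero z.re ht.le
  calc (gaussianReal 0 1).real {x : ℝ | |p.eval x| < ε}
      ≤ (gaussianReal 0 1).real (⋃ z ∈ roots, Metric.ball z.re t) := by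
        have hcover := hmonic.setOf_abs_eval_lt_subset_iUnion_ball ht.le
        rw [hdeg, htd] at hcover
        exact measureReal_mono hcover (measure_ne_top _ _)
    _ ≤ ∑ z ∈ roots, (gaussianReal 0 1).real (Metric.ball z.re t) :=
        measureReal_biUnion_finset_le _ _
    _ ≤ roots.card * (2 * t / √(2 * Real.pi)) := by
        simpa using Finset.sum_le_card_nsmul _ _ _ hball
    _ ≤ d * (2 * t / √(2 * Real.pi)) := by gcongr
    _ < d * t := by
        gcongr
        rw [mul_div_right_comm]
        exact mul_lt_of_lt_one_left ht two_div_sqrt_two_mul_pi_lt_one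
end

section
/- For a mixture F = p₁N(μ₁,σ₁²) + p₂N(μ₂,σ₂²) of two one-dimensional Gaussians with overall mean zero (i.e. p₁μ₁ + p₂μ₂ = 0, p₁+p₂=1, μ₁ ≠ μ₂), setting α = −μ₁μ₂, β = μ₁+μ₂, γ = (σ₂²−σ₁²)/(μ₂−μ₁), the third moment satisfies M₃ = αβ + 3αγ. -/
open MeasureTheory ProbabilityTheory Real Set
open scoped ENNReal NNReal

-- odd function integral zero
lemma odd_integral_zero {f : ℝ → ℝ} (hodd : ∀ x, f (-x) = - f x) :
    ∫ x, f x = 0 := by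
  have h := integral_neg_eq_self f (volume : Measure ℝ)
  simp_rw [hodd, integral_neg] at h
  linarith

lemma int_pow_exp (b : ℝ) (hb : 0 < b) (n : ℕ) :
    Integrable fun x : ℝ => x ^ n * Real.exp (-b * x ^ 2) := by
  have := integrable_rpow_mul_exp_neg_mul_sq hb (s := n) (by exact_mod_cast neg_one_lt_zero.trans_le (Nat.cast_nonneg n))
  simpa [Real.rpow_natCast] using this

lemma sq_exp_integral {b : ℝ} (hb : 0 < b) :
    ∫ x : ℝ, x ^ 2 * Real.exp (-b * x ^ 2) = Real.sqrt π / (2 * b ^ ((3:ℝ)/2)) := by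
  have heven : (fun x : ℝ => x ^ 2 * Real.exp (-b * x ^ 2)) =
      fun x : ℝ => |x| ^ 2 * Real.exp (-b * |x| ^ 2) := by
    ext x; rw [sq_abs]
  rw [heven]
  rw [integral_comp_abs (f := fun x : ℝ => x ^ 2 * Real.exp (-b * x ^ 2))]
  have h := integral_rpow_mul_exp_neg_mul_rpow (p := 2) (q := 2) (hp := two_pos)
    (hq := by norm_num) (hb := hb)
  rw [show ∫ x in Ioi (0:ℝ), x ^ (2:ℕ) * Real.exp (-b * x ^ (2:ℕ))
      = ∫ x in Ioi (0:ℝ), x ^ (2:ℝ) * Real.exp (-b * x ^ (2:ℝ)) by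
    refine setIntegral_congr_fun measurableSet_Ioi (fun x hx => ?_)
    rw [← Real.rpow_natCast x 2]; norm_num, h]
  have hg : Real.Gamma ((2+1)/2) = Real.sqrt π / 2 := by
    rw [show ((2:ℝ)+1)/2 = 1/2 + 1 by norm_num, Real.Gamma_add_one (by norm_num),
      Real.Gamma_one_half_eq]
    ring
  rw [hg, show (-((2:ℝ)+1)/2) = -(3/2) by norm_num, Real.rpow_neg hb.le]
  field_simp

lemma gaussian_pdf_integral_mul (μ : ℝ) {v : NNReal} (hv : v ≠ 0) (g : ℝ → ℝ)
    (hg : Measurable g) :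
    ∫ x, g x ∂(gaussianReal μ v) = ∫ x, gaussianPDFReal μ v x * g x := by
  rw [gaussianReal_of_var_ne_zero μ hv]
  have h : (gaussianPDF μ v) = fun x => ((gaussianPDFReal μ v x).toNNReal : ℝ≥0∞) := by
    ext x; rfl
  rw [h, integral_withDensity_eq_integral_smul
    ((measurable_gaussianPDFReal μ v).real_toNNReal) g]
  refine integral_congr_ae (ae_of_all _ fun x => ?_)
  simp [NNReal.smul_def, Real.coe_toNNReal _ (gaussianPDFReal_nonneg μ v x)]

lemma gaussian_third_moment (μ : ℝ) (v : ℝ≥0) :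
    ∫ x, x ^ 3 ∂(gaussianReal μ v) = μ ^ 3 + 3 * μ * v := by
  by_cases hv : v = 0
  · subst hv
    simp [integral_dirac]
  · have hvpos : (0:ℝ) < v := by positivity
    set C : ℝ := (Real.sqrt (2 * π * v))⁻¹ with hCdef
    set b : ℝ := (2 * (v:ℝ))⁻¹ with hbdef
    have hb : 0 < b := by positivity
    have hpdf0 : ∀ (n : ℕ) (x : ℝ), gaussianPDFReal 0 v x * x ^ n
        = C * (x ^ n * Real.exp (-b * x ^ 2)) := by
      intro n x
      rw [gaussianPDFReal, sub_zero,
        show -x ^ 2 / (2 * (v:ℝ)) = -b * x ^ 2 by rw [hbdef]; field_simp]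
      ring
    have hint : ∀ n : ℕ, Integrable (fun x : ℝ => gaussianPDFReal 0 v x * x ^ n) := by
      intro n
      have := (int_pow_exp b hb n).const_mul C
      exact this.congr (ae_of_all _ fun x => (hpdf0 n x).symm)
    have E0 : ∫ x, gaussianPDFReal 0 v x = 1 := integral_gaussianPDFReal_eq_one 0 hv
    have E1 : ∫ x, gaussianPDFReal 0 v x * x ^ 1 = 0 := by
      apply odd_integral_zero
      intro x
      rw [hpdf0 1, hpdf0 1]
      simp only [neg_sq, pow_one]
      ring
    have E3 : ∫ x, gaussianPDFReal 0 v x * x ^ 3 = 0 := by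
      apply odd_integral_zero
      intro x
      rw [hpdf0 3, hpdf0 3]
      simp only [neg_sq]
      ring
    have E2 : ∫ x, gaussianPDFReal 0 v x * x ^ 2 = v := by
      simp_rw [hpdf0 2]
      rw [integral_const_mul, sq_exp_integral hb]
      have h32 : (b ^ ((3:ℝ)/2)) = ((2*(v:ℝ)) * Real.sqrt (2*(v:ℝ)))⁻¹ := by
        rw [hbdef, Real.inv_rpow (by positivity),
          show (3:ℝ)/2 = 1 + 1/2 by norm_num, Real.rpow_add (by positivity),
          Real.rpow_one, ← Real.sqrt_eq_rpow]
      have hC : C = (Real.sqrt π * Real.sqrt (2*(v:ℝ)))⁻¹ := by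
        rw [hCdef, show 2 * π * (v:ℝ) = π * (2*(v:ℝ)) by ring,
          Real.sqrt_mul pi_nonneg]
      rw [h32, hC]
      have h1 : Real.sqrt π ≠ 0 := by positivity
      have h2 : Real.sqrt (2*(v:ℝ)) ≠ 0 := by positivity
      have h3 : Real.sqrt (2*(v:ℝ)) * Real.sqrt (2*(v:ℝ)) = 2*(v:ℝ) :=
        Real.mul_self_sqrt (by positivity)
      field_simp
    rw [gaussian_pdf_integral_mul μ hv _ (measurable_id'.pow_const 3)]
    have hshift : (∫ x, gaussianPDFReal μ v x * x ^ 3)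
        = ∫ x, gaussianPDFReal 0 v x * (x + μ) ^ 3 := by
      rw [← MeasureTheory.integral_add_right_eq_self
        (fun x => gaussianPDFReal μ v x * x ^ 3) μ]
      congr 1
      ext x
      rw [gaussianPDFReal_add, sub_self]
    rw [hshift]
    have hexpand : (fun x : ℝ => gaussianPDFReal 0 v x * (x + μ) ^ 3)
        = fun x : ℝ => gaussianPDFReal 0 v x * x ^ 3
            + ((3*μ) * (gaussianPDFReal 0 v x * x ^ 2)
            + ((3*μ^2) * (gaussianPDFReal 0 v x * x ^ 1)
            + μ^3 * (gaussianPDFReal 0 v x * x ^ 0))) := funext fun x => by ring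
    have h2' : Integrable (fun x : ℝ => 3*μ*(gaussianPDFReal 0 v x * x ^ 2)) :=
      (hint 2).const_mul _
    have h1' : Integrable (fun x : ℝ => 3*μ^2*(gaussianPDFReal 0 v x * x ^ 1)) :=
      (hint 1).const_mul _
    have h0' : Integrable (fun x : ℝ => μ^3*(gaussianPDFReal 0 v x * x ^ 0)) :=
      (hint 0).const_mul _
    have h10 : Integrable (fun x : ℝ => 3*μ^2*(gaussianPDFReal 0 v x * x ^ 1)
        + μ^3*(gaussianPDFReal 0 v x * x ^ 0)) := h1'.add h0'
    have h210 : Integrable (fun x : ℝ => 3*μ*(gaussianPDFReal 0 v x * x ^ 2)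
        + (3*μ^2*(gaussianPDFReal 0 v x * x ^ 1)
          + μ^3*(gaussianPDFReal 0 v x * x ^ 0))) := h2'.add h10
    rw [hexpand,
      integral_add (hint 3) h210,
      integral_add h2' h10,
      integral_add h1' h0',
      integral_const_mul, integral_const_mul, integral_const_mul]
    have E0' : ∫ x, gaussianPDFReal 0 v x * x ^ 0 = 1 := by simpa using E0
    rw [E3, E2, E1, E0']
    ring


/-- Third moment of a zero-mean mixture of two Gaussians:
`M₃ = αβ + 3αγ` where `α = −μ₁μ₂`, `β = μ₁+μ₂`, `γ = (σ₂²−σ₁²)/(μ₂−μ₁)`. -/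
theorem mixture_third_moment (p₁ p₂ μ₁ μ₂ : ℝ) (v₁ v₂ : NNReal)
    (hp₁ : 0 < p₁) (hp₂ : 0 < p₂) (hsum : p₁ + p₂ = 1)
    (hmean : p₁ * μ₁ + p₂ * μ₂ = 0) (hne : μ₁ ≠ μ₂)
    (α β γ : ℝ) (hα : α = -(μ₁ * μ₂)) (hβ : β = μ₁ + μ₂)
    (hγ : γ = ((v₂ : ℝ) - (v₁ : ℝ)) / (μ₂ - μ₁)) :
    p₁ * ∫ x, x ^ 3 ∂(gaussianReal μ₁ v₁) + p₂ * ∫ x, x ^ 3 ∂(gaussianReal μ₂ v₂)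
      = α * β + 3 * α * γ := by
  have hne' : μ₂ - μ₁ ≠ 0 := sub_ne_zero.mpr (Ne.symm hne)
  have hp2 : p₂ = 1 - p₁ := by linarith
  subst hp2
  have hp1 : p₁ = μ₂ / (μ₂ - μ₁) := by
    field_simp
    linear_combination -hmean
  subst hp1
  rw [gaussian_third_moment, gaussian_third_moment, hα, hβ, hγ]
  field_simp
  ring
end

section
/- For a mixture of two one-dimensional Gaussians with overall mean zero and parameters α = −μ₁μ₂, β = μ₁+μ₂, γ = (σ₂²−σ₁²)/(μ₂−μ₁), the excess fourth moment satisfies X₄ := M₄ − 3M₂² = −2α² + αβ² + 6αβγ + 3αγ². -/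
open MeasureTheory Real Set ProbabilityTheory NNReal ENNReal

lemma integrable_pow_gauss {b : ℝ} (hb : 0 < b) (n : ℕ) :
    Integrable fun x : ℝ => x ^ n * Real.exp (-b * x ^ 2) := by
  have h := integrable_rpow_mul_exp_neg_mul_sq hb (s := (n : ℝ))
    (by exact_mod_cast neg_one_lt_zero.trans_le (Nat.cast_nonneg n))
  simpa [Real.rpow_natCast] using h

lemma gamma_three_half : Real.Gamma (3/2) = Real.sqrt π / 2 := by
  have : (3/2 : ℝ) = 1/2 + 1 := by norm_num
  rw [this, Real.Gamma_add_one (by norm_num), Real.Gamma_one_half_eq]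
  ring

lemma gamma_five_half : Real.Gamma (5/2) = 3 * Real.sqrt π / 4 := by
  have : (5/2 : ℝ) = 3/2 + 1 := by norm_num
  rw [this, Real.Gamma_add_one (by norm_num), gamma_three_half]
  ring

lemma rpow_neg_three_half {b : ℝ} (hb : 0 < b) :
    b ^ ((-(3:ℝ))/2) = (Real.sqrt b * b)⁻¹ := by
  rw [show ((-(3:ℝ))/2) = -(1/2 + 1) by norm_num, Real.rpow_neg hb.le,
    Real.rpow_add hb, Real.rpow_one, Real.sqrt_eq_rpow]

lemma rpow_neg_five_half {b : ℝ} (hb : 0 < b) :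
    b ^ ((-(5:ℝ))/2) = (Real.sqrt b * b ^ 2)⁻¹ := by
  rw [show ((-(5:ℝ))/2) = -(1/2 + 2) by norm_num, Real.rpow_neg hb.le,
    Real.rpow_add hb, Real.sqrt_eq_rpow, Real.rpow_two]

lemma I2 {b : ℝ} (hb : 0 < b) :
    ∫ x : ℝ, x ^ 2 * Real.exp (-b * x ^ 2) = Real.sqrt (π / b) / (2 * b) := by
  have heven : (∫ x : ℝ, x ^ 2 * Real.exp (-b * x ^ 2))
      = ∫ x : ℝ, |x| ^ 2 * Real.exp (-b * |x| ^ 2) := by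
    congr 1; ext x; rw [sq_abs]
  rw [heven, integral_comp_abs (f := fun t => t ^ 2 * Real.exp (-b * t ^ 2))]
  have h := integral_rpow_mul_exp_neg_mul_rpow (p := 2) (q := 2) two_pos (by norm_num) hb
  have h2 : ∀ x ∈ Ioi (0:ℝ), x ^ (2:ℝ) * Real.exp (-b * x ^ (2:ℝ))
      = x ^ 2 * Real.exp (-b * x ^ 2) := by
    intro x hx
    rw [show (2:ℝ) = ((2:ℕ):ℝ) by norm_num, Real.rpow_natCast]
  rw [setIntegral_congr_fun measurableSet_Ioi h2] at h
  rw [h, show (-(2+1)/2 : ℝ) = (-(3:ℝ))/2 by norm_num,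
    show ((2+1)/2 : ℝ) = 3/2 by norm_num, gamma_three_half,
    rpow_neg_three_half hb, Real.sqrt_div (le_of_lt Real.pi_pos)]
  have hsb : Real.sqrt b ≠ 0 := (Real.sqrt_pos.mpr hb).ne'
  field_simp

lemma I4 {b : ℝ} (hb : 0 < b) :
    ∫ x : ℝ, x ^ 4 * Real.exp (-b * x ^ 2) = 3 * Real.sqrt (π / b) / (4 * b ^ 2) := by
  have heven : (∫ x : ℝ, x ^ 4 * Real.exp (-b * x ^ 2))
      = ∫ x : ℝ, |x| ^ 4 * Real.exp (-b * |x| ^ 2) := by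
    congr 1; ext x; rw [sq_abs, pow_abs, abs_of_nonneg (by positivity)]
  rw [heven, integral_comp_abs (f := fun t => t ^ 4 * Real.exp (-b * t ^ 2))]
  have h := integral_rpow_mul_exp_neg_mul_rpow (p := 2) (q := 4) two_pos (by norm_num) hb
  have h2 : ∀ x ∈ Ioi (0:ℝ), x ^ (4:ℝ) * Real.exp (-b * x ^ (2:ℝ))
      = x ^ 4 * Real.exp (-b * x ^ 2) := by
    intro x hx
    rw [show (2:ℝ) = ((2:ℕ):ℝ) by norm_num, show (4:ℝ) = ((4:ℕ):ℝ) by norm_num,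
      Real.rpow_natCast, Real.rpow_natCast]
  rw [setIntegral_congr_fun measurableSet_Ioi h2] at h
  rw [h, show (-(4+1)/2 : ℝ) = (-(5:ℝ))/2 by norm_num,
    show ((4+1)/2 : ℝ) = 5/2 by norm_num, gamma_five_half,
    rpow_neg_five_half hb, Real.sqrt_div (le_of_lt Real.pi_pos)]
  have hsb : Real.sqrt b ≠ 0 := (Real.sqrt_pos.mpr hb).ne'
  field_simp

lemma Iodd {b : ℝ} {n : ℕ} (hn : Odd n) :
    ∫ x : ℝ, x ^ n * Real.exp (-b * x ^ 2) = 0 := by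
  have h := integral_neg_eq_self (fun x : ℝ => x ^ n * Real.exp (-b * x ^ 2)) volume
  have h2 : (∫ x : ℝ, (-x) ^ n * Real.exp (-b * (-x) ^ 2))
      = -∫ x : ℝ, x ^ n * Real.exp (-b * x ^ 2) := by
    rw [← integral_neg]
    congr 1; ext x
    rw [hn.neg_pow, neg_sq]; ring
  rw [h2] at h
  linarith

lemma integral_gaussianReal_eq (μ : ℝ) {v : ℝ≥0} (hv : v ≠ 0) (g : ℝ → ℝ) :
    ∫ x, g x ∂(gaussianReal μ v) = ∫ x, gaussianPDFReal μ v x * g x := by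
  rw [gaussianReal_of_var_ne_zero μ hv, gaussianPDF_def]
  have h : (fun x => ENNReal.ofReal (gaussianPDFReal μ v x))
      = fun x => ((gaussianPDFReal μ v x).toNNReal : ℝ≥0∞) := rfl
  rw [h, integral_withDensity_eq_integral_smul
    ((measurable_gaussianPDFReal μ v).real_toNNReal) g]
  congr 1; ext x
  simp [NNReal.smul_def, Real.coe_toNNReal _ (gaussianPDFReal_nonneg μ v x)]

lemma integral_pow_gaussianReal_ne (μ : ℝ) {v : ℝ≥0} (hv : v ≠ 0) (n : ℕ) :
    ∫ x, x ^ n ∂(gaussianReal μ v)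
      = ∫ x : ℝ, (√(2 * π * v))⁻¹ * Real.exp (-(2 * (v:ℝ))⁻¹ * x ^ 2) * (x + μ) ^ n := by
  rw [integral_gaussianReal_eq μ hv (fun x => x ^ n),
    ← MeasureTheory.integral_add_right_eq_self
      (fun x => gaussianPDFReal μ v x * x ^ n) μ]
  congr 1; ext x
  rw [gaussianPDFReal]
  simp only [add_sub_cancel_right]
  congr 2
  ring

lemma integral_sq_gaussianReal (μ : ℝ) (v : ℝ≥0) :
    ∫ x, x ^ 2 ∂(gaussianReal μ v) = μ ^ 2 + v := by
  by_cases hv : v = 0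
  · subst hv
    rw [gaussianReal_zero_var, integral_dirac]
    simp
  · have hvpos : (0:ℝ) < v := lt_of_le_of_ne v.coe_nonneg (by exact_mod_cast (Ne.symm hv))
    set b : ℝ := (2 * (v:ℝ))⁻¹ with hbdef
    have hb : 0 < b := by positivity
    set C : ℝ := (√(2 * π * v))⁻¹ with hCdef
    rw [integral_pow_gaussianReal_ne μ hv 2]
    have e : (fun x : ℝ => C * Real.exp (-b * x ^ 2) * (x + μ) ^ 2)
        = fun x : ℝ => (C * μ ^ 2) * (x ^ 0 * Real.exp (-b * x ^ 2))
          + ((C * (2 * μ)) * (x ^ 1 * Real.exp (-b * x ^ 2))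
            + C * (x ^ 2 * Real.exp (-b * x ^ 2))) := by
      ext x; ring
    have g1 : Integrable (fun x : ℝ => (C * (2 * μ)) * (x ^ 1 * Real.exp (-b * x ^ 2))
        + C * (x ^ 2 * Real.exp (-b * x ^ 2))) volume :=
      ((integrable_pow_gauss hb 1).const_mul _).add ((integrable_pow_gauss hb 2).const_mul _)
    rw [e, integral_add ((integrable_pow_gauss hb 0).const_mul _) g1,
      integral_add ((integrable_pow_gauss hb 1).const_mul _)
        ((integrable_pow_gauss hb 2).const_mul _),
      integral_const_mul, integral_const_mul, integral_const_mul,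
      Iodd odd_one, I2 hb]
    have h0 : ∫ x : ℝ, x ^ 0 * Real.exp (-b * x ^ 2) = Real.sqrt (π / b) := by
      simp only [pow_zero, one_mul]
      exact integral_gaussian b
    rw [h0]
    have hπb : π / b = 2 * π * v := by
      rw [hbdef]; field_simp
    have hsq : Real.sqrt (π / b) = Real.sqrt (2 * π * v) := by rw [hπb]
    have hCs : C * Real.sqrt (2 * π * v) = 1 := by
      rw [hCdef]
      exact inv_mul_cancel₀ (Real.sqrt_ne_zero'.mpr (by positivity))
    have hbv : (2 * b)⁻¹ = (v:ℝ) := by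
      rw [hbdef]; field_simp
    rw [hsq]
    calc C * μ ^ 2 * Real.sqrt (2 * π * v) + (C * (2*μ) * 0
          + C * (Real.sqrt (2 * π * v) / (2 * b)))
        = μ ^ 2 * (C * Real.sqrt (2 * π * v))
          + (C * Real.sqrt (2 * π * v)) * (2 * b)⁻¹ := by ring
      _ = μ ^ 2 + v := by rw [hCs, hbv]; ring

lemma integral_fourth_gaussianReal (μ : ℝ) (v : ℝ≥0) :
    ∫ x, x ^ 4 ∂(gaussianReal μ v) = μ ^ 4 + 6 * μ ^ 2 * v + 3 * (v:ℝ) ^ 2 := by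
  by_cases hv : v = 0
  · subst hv
    rw [gaussianReal_zero_var, integral_dirac]
    simp
  · have hvpos : (0:ℝ) < v := lt_of_le_of_ne v.coe_nonneg (by exact_mod_cast (Ne.symm hv))
    set b : ℝ := (2 * (v:ℝ))⁻¹ with hbdef
    have hb : 0 < b := by positivity
    set C : ℝ := (√(2 * π * v))⁻¹ with hCdef
    rw [integral_pow_gaussianReal_ne μ hv 4]
    have e : (fun x : ℝ => C * Real.exp (-b * x ^ 2) * (x + μ) ^ 4)
        = fun x : ℝ => (C * μ ^ 4) * (x ^ 0 * Real.exp (-b * x ^ 2))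
          + ((C * (4 * μ ^ 3)) * (x ^ 1 * Real.exp (-b * x ^ 2))
          + ((C * (6 * μ ^ 2)) * (x ^ 2 * Real.exp (-b * x ^ 2))
          + ((C * (4 * μ)) * (x ^ 3 * Real.exp (-b * x ^ 2))
          + C * (x ^ 4 * Real.exp (-b * x ^ 2))))) := by
      ext x; ring
    have g4 : Integrable (fun x : ℝ => (C * (4 * μ)) * (x ^ 3 * Real.exp (-b * x ^ 2))
        + C * (x ^ 4 * Real.exp (-b * x ^ 2))) volume :=
      ((integrable_pow_gauss hb 3).const_mul _).add ((integrable_pow_gauss hb 4).const_mul _)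
    have g3 : Integrable (fun x : ℝ => (C * (6 * μ ^ 2)) * (x ^ 2 * Real.exp (-b * x ^ 2))
        + ((C * (4 * μ)) * (x ^ 3 * Real.exp (-b * x ^ 2))
          + C * (x ^ 4 * Real.exp (-b * x ^ 2)))) volume :=
      ((integrable_pow_gauss hb 2).const_mul _).add g4
    have g2 : Integrable (fun x : ℝ => (C * (4 * μ ^ 3)) * (x ^ 1 * Real.exp (-b * x ^ 2))
        + ((C * (6 * μ ^ 2)) * (x ^ 2 * Real.exp (-b * x ^ 2))
        + ((C * (4 * μ)) * (x ^ 3 * Real.exp (-b * x ^ 2))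
          + C * (x ^ 4 * Real.exp (-b * x ^ 2))))) volume :=
      ((integrable_pow_gauss hb 1).const_mul _).add g3
    rw [e, integral_add ((integrable_pow_gauss hb 0).const_mul _) g2,
      integral_add ((integrable_pow_gauss hb 1).const_mul _) g3,
      integral_add ((integrable_pow_gauss hb 2).const_mul _) g4,
      integral_add ((integrable_pow_gauss hb 3).const_mul _)
        ((integrable_pow_gauss hb 4).const_mul _),
      integral_const_mul, integral_const_mul, integral_const_mul, integral_const_mul,
      integral_const_mul, Iodd odd_one, Iodd (⟨1, by norm_num⟩ : Odd 3), I2 hb, I4 hb]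
    have h0 : ∫ x : ℝ, x ^ 0 * Real.exp (-b * x ^ 2) = Real.sqrt (π / b) := by
      simp only [pow_zero, one_mul]
      exact integral_gaussian b
    rw [h0]
    have hπb : π / b = 2 * π * v := by
      rw [hbdef]; field_simp
    have hsq : Real.sqrt (π / b) = Real.sqrt (2 * π * v) := by rw [hπb]
    have hCs : C * Real.sqrt (2 * π * v) = 1 := by
      rw [hCdef]
      exact inv_mul_cancel₀ (Real.sqrt_ne_zero'.mpr (by positivity))
    have hbv : (2 * b)⁻¹ = (v:ℝ) := by
      rw [hbdef]; field_simp
    have hbv2 : (4 * b ^ 2)⁻¹ = (v:ℝ) ^ 2 := by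
      rw [hbdef]; field_simp; ring
    rw [hsq]
    calc C * μ ^ 4 * Real.sqrt (2*π*v) + (C * (4*μ^3) * 0
          + (C * (6*μ^2) * (Real.sqrt (2*π*v) / (2*b))
          + (C * (4*μ) * 0 + C * (3 * Real.sqrt (2*π*v) / (4 * b ^ 2)))))
        = μ ^ 4 * (C * Real.sqrt (2*π*v))
          + 6 * μ ^ 2 * ((C * Real.sqrt (2*π*v)) * (2*b)⁻¹)
          + 3 * ((C * Real.sqrt (2*π*v)) * (4 * b ^ 2)⁻¹) := by ring
      _ = μ ^ 4 + 6 * μ ^ 2 * v + 3 * (v:ℝ) ^ 2 := by rw [hCs, hbv, hbv2]; ring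


open MeasureTheory ProbabilityTheory

/-- Excess fourth moment of a zero-mean mixture of two Gaussians:
`X₄ := M₄ − 3M₂² = −2α² + αβ² + 6αβγ + 3αγ²`. -/
theorem mixture_excess_fourth_moment (p₁ p₂ μ₁ μ₂ : ℝ) (v₁ v₂ : NNReal)
    (hp₁ : 0 < p₁) (hp₂ : 0 < p₂) (hsum : p₁ + p₂ = 1)
    (hmean : p₁ * μ₁ + p₂ * μ₂ = 0) (hne : μ₁ ≠ μ₂)
    (α β γ : ℝ) (hα : α = -(μ₁ * μ₂)) (hβ : β = μ₁ + μ₂)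
    (hγ : γ = ((v₂ : ℝ) - (v₁ : ℝ)) / (μ₂ - μ₁))
    (M₂ M₄ : ℝ)
    (hM₂ : M₂ = p₁ * ∫ x, x ^ 2 ∂(gaussianReal μ₁ v₁)
        + p₂ * ∫ x, x ^ 2 ∂(gaussianReal μ₂ v₂))
    (hM₄ : M₄ = p₁ * ∫ x, x ^ 4 ∂(gaussianReal μ₁ v₁)
        + p₂ * ∫ x, x ^ 4 ∂(gaussianReal μ₂ v₂)) :
    M₄ - 3 * M₂ ^ 2 = -2 * α ^ 2 + α * β ^ 2 + 6 * α * β * γ + 3 * α * γ ^ 2 := by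
  simp only [integral_sq_gaussianReal, integral_fourth_gaussianReal] at hM₂ hM₄
  have hd : μ₂ - μ₁ ≠ 0 := sub_ne_zero.mpr (Ne.symm hne)
  have hp1 : p₁ = μ₂ / (μ₂ - μ₁) := by
    field_simp
    linear_combination μ₂ * hsum - hmean
  have hp2 : p₂ = -μ₁ / (μ₂ - μ₁) := by
    field_simp
    linear_combination hmean - μ₁ * hsum
  subst hM₂ hM₄ hα hβ hγ hp1 hp2
  field_simp
  ring
end

section
/- For a mixture of two one-dimensional Gaussians with overall mean zero and parameters α = −μ₁μ₂, β = μ₁+μ₂, γ = (σ₂²−σ₁²)/(μ₂−μ₁), the excess fifth moment satisfies X₅ := M₅ − 10M₃M₂ = α(β³ − 8αβ + 10β²γ + 15γ²β − 20αγ). -/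
/-!
The moments `mₙ` of `N(μ, v)` are the Taylor coefficients at `0` of its moment generating
function `exp (μ t + v t² / 2)`, whose derivative is `(μ + v t)` times itself; differentiating
this relation gives `mₙ₊₂ = μ mₙ₊₁ + (n + 1) v mₙ`, hence `m₂ = μ² + v`, `m₃ = μ³ + 3μv` and
`m₅ = μ⁵ + 10μ³v + 15μv²`. For the mixture, `p₁ + p₂ = 1` and `p₁μ₁ + p₂μ₂ = 0` determine
`p₁ = μ₂ / (μ₂ - μ₁)` and `p₂ = -μ₁ / (μ₂ - μ₁)`, and `v₂ = v₁ + γ (μ₂ - μ₁)`; substituting,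
the identity is a polynomial identity in `μ₁, μ₂, v₁, γ`.
-/

open MeasureTheory ProbabilityTheory Real
open scoped NNReal

lemma iteratedDeriv_exp_quadratic_succ_succ (a b : ℝ) (n : ℕ) :
    iteratedDeriv (n + 2) (fun t ↦ rexp (a * t + b * t ^ 2 / 2)) = fun t ↦
      (a + b * t) * iteratedDeriv (n + 1) (fun t ↦ rexp (a * t + b * t ^ 2 / 2)) t
        + (n + 1) * b * iteratedDeriv n (fun t ↦ rexp (a * t + b * t ^ 2 / 2)) t := by
  set f : ℝ → ℝ := fun t ↦ rexp (a * t + b * t ^ 2 / 2)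
  have hD : ∀ k t, HasDerivAt (iteratedDeriv k f) (iteratedDeriv (k + 1) f t) t := fun k t ↦ by
    rw [iteratedDeriv_succ]
    exact ((show ContDiff ℝ ⊤ f by fun_prop).differentiable_iteratedDeriv k
      (WithTop.coe_lt_top _) t).hasDerivAt
  have hlin : ∀ t, HasDerivAt (fun t ↦ a + b * t) b t := fun t ↦ by
    simpa using ((hasDerivAt_id' t).const_mul b).const_add a
  induction n with
  | zero =>
    have hf : iteratedDeriv 1 f = fun t ↦ (a + b * t) * iteratedDeriv 0 f t := by
      ext t
      rw [iteratedDeriv_one, iteratedDeriv_zero]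
      have hexponent : HasDerivAt (fun t ↦ a * t + b * t ^ 2 / 2) (a + b * t) t := by
        refine (((hasDerivAt_id' t).const_mul a).fun_add
          (((hasDerivAt_pow 2 t).const_mul b).div_const 2)).congr_deriv ?_
        push_cast
        ring
      exact hexponent.exp.deriv.trans (mul_comm _ _)
    ext t
    conv_lhs => rw [iteratedDeriv_succ, hf]
    refine ((hlin t).mul (hD 0 t)).deriv.trans ?_
    rw [hf]
    ring
  | succ n ih =>
    ext t
    conv_lhs => rw [iteratedDeriv_succ, ih]
    refine ((hlin t).mul (hD _ t) |>.add ((hD n t).const_mul _)).deriv.trans ?_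
    push_cast
    ring

section GaussianMoments

variable (μ : ℝ) (v : ℝ≥0)

lemma integral_pow_gaussianReal_eq_iteratedDeriv (n : ℕ) :
    ∫ x, x ^ n ∂gaussianReal μ v = iteratedDeriv n (fun t ↦ rexp (μ * t + v * t ^ 2 / 2)) 0 := by
  rw [← mgf_fun_id_gaussianReal,
    iteratedDeriv_mgf_zero (by simp [integrableExpSet_fun_id_gaussianReal])]
  rfl

lemma integral_pow_add_two_gaussianReal (n : ℕ) :
    ∫ x, x ^ (n + 2) ∂gaussianReal μ v
      = μ * ∫ x, x ^ (n + 1) ∂gaussianReal μ v + (n + 1) * v * ∫ x, x ^ n ∂gaussianReal μ v := by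
  simp only [integral_pow_gaussianReal_eq_iteratedDeriv, iteratedDeriv_exp_quadratic_succ_succ,
    mul_zero, add_zero]

lemma integral_pow_two_gaussianReal : ∫ x, x ^ 2 ∂gaussianReal μ v = μ ^ 2 + v := by
  rw [integral_pow_add_two_gaussianReal μ v 0]
  simp only [zero_add, pow_one, pow_zero, integral_id_gaussianReal, integral_const,
    probReal_univ, smul_eq_mul, Nat.cast_zero]
  ring

lemma integral_pow_three_gaussianReal : ∫ x, x ^ 3 ∂gaussianReal μ v = μ ^ 3 + 3 * μ * v := by
  rw [integral_pow_add_two_gaussianReal μ v 1, integral_pow_two_gaussianReal]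
  simp only [pow_one, integral_id_gaussianReal, Nat.cast_one]
  ring

lemma integral_pow_five_gaussianReal :
    ∫ x, x ^ 5 ∂gaussianReal μ v = μ ^ 5 + 10 * μ ^ 3 * v + 15 * μ * v ^ 2 := by
  rw [integral_pow_add_two_gaussianReal μ v 3, integral_pow_add_two_gaussianReal μ v 2,
    integral_pow_three_gaussianReal, integral_pow_two_gaussianReal]
  push_cast
  ring

end GaussianMoments

theorem mixture_excess_fifth_moment_general (p₁ p₂ μ₁ μ₂ : ℝ) (v₁ v₂ : NNReal)
    (hsum : p₁ + p₂ = 1)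
    (hmean : p₁ * μ₁ + p₂ * μ₂ = 0) (hne : μ₁ ≠ μ₂)
    (α β γ : ℝ) (hα : α = -(μ₁ * μ₂)) (hβ : β = μ₁ + μ₂)
    (hγ : γ = ((v₂ : ℝ) - (v₁ : ℝ)) / (μ₂ - μ₁))
    (M₂ M₃ M₅ : ℝ)
    (hM₂ : M₂ = p₁ * ∫ x, x ^ 2 ∂(gaussianReal μ₁ v₁)
        + p₂ * ∫ x, x ^ 2 ∂(gaussianReal μ₂ v₂))
    (hM₃ : M₃ = p₁ * ∫ x, x ^ 3 ∂(gaussianReal μ₁ v₁)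
        + p₂ * ∫ x, x ^ 3 ∂(gaussianReal μ₂ v₂))
    (hM₅ : M₅ = p₁ * ∫ x, x ^ 5 ∂(gaussianReal μ₁ v₁)
        + p₂ * ∫ x, x ^ 5 ∂(gaussianReal μ₂ v₂)) :
    M₅ - 10 * M₃ * M₂
      = α * (β ^ 3 - 8 * α * β + 10 * β ^ 2 * γ + 15 * γ ^ 2 * β - 20 * α * γ) := by
  have hgap : μ₂ - μ₁ ≠ 0 := sub_ne_zero_of_ne hne.symm
  have hp₁ : p₁ = μ₂ / (μ₂ - μ₁) := by
    rw [eq_div_iff hgap]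
    linear_combination -hmean + μ₂ * hsum
  have hp₂ : p₂ = -μ₁ / (μ₂ - μ₁) := by
    rw [eq_div_iff hgap]
    linear_combination hmean - μ₁ * hsum
  have hv₂ : (v₂ : ℝ) = v₁ + γ * (μ₂ - μ₁) := by
    rw [hγ, div_mul_cancel₀ _ hgap]
    ring
  rw [hM₂, hM₃, hM₅, integral_pow_two_gaussianReal, integral_pow_two_gaussianReal,
    integral_pow_three_gaussianReal, integral_pow_three_gaussianReal,
    integral_pow_five_gaussianReal, integral_pow_five_gaussianReal, hα, hβ, hp₁, hp₂, hv₂]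
  field_simp
  ring

/-- Excess fifth moment of a zero-mean mixture of two Gaussians:
`X₅ := M₅ − 10M₃M₂ = α(β³ − 8αβ + 10β²γ + 15γ²β − 20αγ)`. -/
theorem mixture_excess_fifth_moment (p₁ p₂ μ₁ μ₂ : ℝ) (v₁ v₂ : NNReal)
    (hp₁ : 0 < p₁) (hp₂ : 0 < p₂) (hsum : p₁ + p₂ = 1)
    (hmean : p₁ * μ₁ + p₂ * μ₂ = 0) (hne : μ₁ ≠ μ₂)
    (α β γ : ℝ) (hα : α = -(μ₁ * μ₂)) (hβ : β = μ₁ + μ₂)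
    (hγ : γ = ((v₂ : ℝ) - (v₁ : ℝ)) / (μ₂ - μ₁))
    (M₂ M₃ M₅ : ℝ)
    (hM₂ : M₂ = p₁ * ∫ x, x ^ 2 ∂(gaussianReal μ₁ v₁)
        + p₂ * ∫ x, x ^ 2 ∂(gaussianReal μ₂ v₂))
    (hM₃ : M₃ = p₁ * ∫ x, x ^ 3 ∂(gaussianReal μ₁ v₁)
        + p₂ * ∫ x, x ^ 3 ∂(gaussianReal μ₂ v₂))
    (hM₅ : M₅ = p₁ * ∫ x, x ^ 5 ∂(gaussianReal μ₁ v₁)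
        + p₂ * ∫ x, x ^ 5 ∂(gaussianReal μ₂ v₂)) :
    M₅ - 10 * M₃ * M₂
      = α * (β ^ 3 - 8 * α * β + 10 * β ^ 2 * γ + 15 * γ ^ 2 * β - 20 * α * γ) :=
  mixture_excess_fifth_moment_general p₁ p₂ μ₁ μ₂ v₁ v₂ hsum hmean hne α β γ hα hβ hγ M₂ M₃ M₅ hM₂
    hM₃ hM₅
end

section
/- Let α > 0 and β, γ be reals, with X₃, X₄, X₅ defined as the excess moment polynomials in (α,β,γ). Then α is a root of Pearson's ninth-degree polynomial: 6(2X₃α³ + X₅α² − 3X₃X₄α + 2X₃³)² + (2α³ + 3X₄α − 4X₃²)²(2α³ + X₄α − X₃²) = 0. -/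
/-- `α` is a root of Pearson's ninth-degree polynomial `p₅`. -/
theorem pearson_p5_root (α β γ X₃ X₄ X₅ : ℝ) (hα : 0 < α)
    (h₃ : X₃ = α * β + 3 * α * γ)
    (h₄ : X₄ = -2 * α ^ 2 + α * β ^ 2 + 6 * α * β * γ + 3 * α * γ ^ 2)
    (h₅ : X₅ = α * (β ^ 3 - 8 * α * β + 10 * β ^ 2 * γ + 15 * γ ^ 2 * β - 20 * α * γ)) :
    6 * (2 * X₃ * α ^ 3 + X₅ * α ^ 2 - 3 * X₃ * X₄ * α + 2 * X₃ ^ 3) ^ 2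
      + (2 * α ^ 3 + 3 * X₄ * α - 4 * X₃ ^ 2) ^ 2
        * (2 * α ^ 3 + X₄ * α - X₃ ^ 2) = 0 := by
  subst h₃ h₄ h₅; ring
end

section
/- Let α > 0 and β, γ be reals, with X₃, X₄, X₅, X₆ the excess moment polynomials in (α,β,γ). Then p₆(α) = 0, where p₆(y) = (4X₃² − 3X₄y − 2y³)(4X₃⁴ − 4X₃²X₄y − 8X₃²y³ − X₄²y² + 8X₄y⁴ + X₆y³ + 4y⁶) − (10X₃³ − 7X₃X₄y − 2X₃y³)(2X₃³ − 3X₃X₄y + 2X₃y³ + X₅y²). -/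
/-- `α` is a root of the sixth-moment analogue `p₆` of Pearson's polynomial. -/
theorem pearson_p6_root (α β γ X₃ X₄ X₅ X₆ : ℝ) (hα : 0 < α)
    (h₃ : X₃ = α * β + 3 * α * γ)
    (h₄ : X₄ = -2 * α ^ 2 + α * β ^ 2 + 6 * α * β * γ + 3 * α * γ ^ 2)
    (h₅ : X₅ = α * (β ^ 3 - 8 * α * β + 10 * β ^ 2 * γ + 15 * γ ^ 2 * β - 20 * α * γ))
    (h₆ : X₆ = α * (16 * α ^ 2 - 12 * α * β ^ 2 - 60 * α * β * γ + β ^ 4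
        + 15 * β ^ 3 * γ + 45 * β ^ 2 * γ ^ 2 + 15 * β * γ ^ 3)) :
    (4 * X₃ ^ 2 - 3 * X₄ * α - 2 * α ^ 3)
        * (4 * X₃ ^ 4 - 4 * X₃ ^ 2 * X₄ * α - 8 * X₃ ^ 2 * α ^ 3 - X₄ ^ 2 * α ^ 2
            + 8 * X₄ * α ^ 4 + X₆ * α ^ 3 + 4 * α ^ 6)
      - (10 * X₃ ^ 3 - 7 * X₃ * X₄ * α - 2 * X₃ * α ^ 3)
        * (2 * X₃ ^ 3 - 3 * X₃ * X₄ * α + 2 * X₃ * α ^ 3 + X₅ * α ^ 2) = 0 := by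
  subst h₃ h₄ h₅ h₆; ring
end

section
/- For α > 0 and β, γ real with X₃ = αβ + 3αγ and X₄ = −2α² + αβ² + 6αβγ + 3αγ², the cubic s(y) = 2y³ + X₄y − X₃² has exactly one positive real root y_max, and α ≤ y_max. -/
/-- Uniqueness of positive roots of `2y³ + cy − d` when `d ≥ 0`. -/
lemma cubic_pos_root_unique (c d y z : ℝ) (hd : 0 ≤ d) (hy : 0 < y) (hz : 0 < z)
    (hy0 : 2 * y ^ 3 + c * y - d = 0) (hz0 : 2 * z ^ 3 + c * z - d = 0) : y = z := by
  have key : (y - z) * (2 * y * z * (y + z) + d) = 0 := by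
    linear_combination z * hy0 - y * hz0
  have hpos : 0 < 2 * y * z * (y + z) + d := by positivity
  rcases mul_eq_zero.mp key with h | h
  · linarith
  · linarith

/-- The cubic `s(y) = 2y³ + X₄y − X₃²` has exactly one positive real root `y_max`,
and `α ≤ y_max`. -/
theorem ymax_unique_positive_root (α β γ X₃ X₄ : ℝ) (hα : 0 < α)
    (h₃ : X₃ = α * β + 3 * α * γ)
    (h₄ : X₄ = -2 * α ^ 2 + α * β ^ 2 + 6 * α * β * γ + 3 * α * γ ^ 2) :
    ∃ ymax : ℝ, 0 < ymax ∧ 2 * ymax ^ 3 + X₄ * ymax - X₃ ^ 2 = 0 ∧ α ≤ ymax ∧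
      ∀ y : ℝ, 0 < y → 2 * y ^ 3 + X₄ * y - X₃ ^ 2 = 0 → y = ymax := by
  set f : ℝ → ℝ := fun y => 2 * y ^ 3 + X₄ * y - X₃ ^ 2 with hf
  have hfα : f α = -6 * (α * γ) ^ 2 := by simp only [hf]; rw [h₃, h₄]; ring
  have hfα_le : f α ≤ 0 := by rw [hfα]; nlinarith [sq_nonneg (α * γ)]
  set M : ℝ := 1 + α + |X₄| + X₃ ^ 2 with hM
  have hM1 : 1 ≤ M := by have := abs_nonneg X₄; have := sq_nonneg X₃; nlinarith
  have hMX : |X₄| ≤ M := by have := sq_nonneg X₃; nlinarith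
  have hMd : X₃ ^ 2 ≤ M := by have := abs_nonneg X₄; nlinarith
  have hαM : α ≤ M := by have := abs_nonneg X₄; have := sq_nonneg X₃; nlinarith
  have hfM : 0 ≤ f M := by
    have h1 : -(M * M) ≤ X₄ * M := by
      have := neg_abs_le X₄
      nlinarith
    simp only [hf]
    nlinarith
  have hcont : ContinuousOn f (Set.Icc α M) := by
    apply Continuous.continuousOn; simp only [hf]; continuity
  have : (0 : ℝ) ∈ Set.Icc (f α) (f M) := ⟨hfα_le, hfM⟩
  obtain ⟨ymax, hmem, hroot⟩ := intermediate_value_Icc hαM hcont this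
  refine ⟨ymax, lt_of_lt_of_le hα hmem.1, hroot, hmem.1, ?_⟩
  intro y hy hy0
  exact cubic_pos_root_unique X₄ (X₃ ^ 2) y ymax (sq_nonneg X₃) hy
    (lt_of_lt_of_le hα hmem.1) hy0 hroot
end

section
/- There do not exist reals α > 0, β, γ such that both q₅(α) = 0 and q₆(α) = 0, where q₅(y) = p₅(y)/(y−α) and q₆(y) = p₆(y)/(y−α) evaluated at y = α; equivalently, p₅ and p₆ (as polynomials in y with coefficients the excess moment polynomials in α,β,γ) cannot both have a double root at y = α. -/
/-- Pearson's polynomials `p₅` and `p₆` cannot both have a double root at `y = α`: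
there are no reals `α > 0`, `β`, `γ` with `q₅(α) = q₆(α) = 0`, where
`q₅(y) = p₅(y)/(y−α)` and `q₆(y) = p₆(y)/(y−α)`, whose values at `y = α` are the
explicit polynomial expressions below. -/
theorem p5_p6_no_common_double_root :
    ¬ ∃ α β γ : ℝ, 0 < α ∧
      α ^ 5 * (4 * α + β ^ 2 + 6 * β * γ + 27 * γ ^ 2)
          * (16 * α ^ 2 + 8 * α * β ^ 2 + 72 * α * γ ^ 2 + β ^ 4
              + 18 * β ^ 2 * γ ^ 2 - 135 * γ ^ 4) = 0 ∧
      α ^ 5 * γ * (16 * α ^ 2 * β - 48 * α ^ 2 * γ + 8 * α * β ^ 3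
          - 24 * α * β ^ 2 * γ - 72 * α * β * γ ^ 2 - 72 * α * γ ^ 3
          + β ^ 5 - 3 * β ^ 4 * γ - 18 * β ^ 3 * γ ^ 2 - 18 * β ^ 2 * γ ^ 3
          + 405 * β * γ ^ 4 + 2025 * γ ^ 5) = 0 := by
  rintro ⟨α, β, γ, hα, h5, h6⟩
  have hα5 : (α : ℝ) ^ 5 ≠ 0 := by positivity
  have hf1 : (0:ℝ) < 4 * α + β ^ 2 + 6 * β * γ + 27 * γ ^ 2 := by
    nlinarith [sq_nonneg (β + 3 * γ), sq_nonneg γ]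
  have h2 : 16 * α ^ 2 + 8 * α * β ^ 2 + 72 * α * γ ^ 2 + β ^ 4
      + 18 * β ^ 2 * γ ^ 2 - 135 * γ ^ 4 = 0 := by
    rcases mul_eq_zero.mp h5 with h | h
    · rcases mul_eq_zero.mp h with h | h
      · exact absurd h hα5
      · linarith
    · exact h
  by_cases hγ : γ = 0
  · rw [hγ] at h2
    nlinarith [sq_nonneg β, sq_nonneg (β ^ 2)]
  have hbig : 16 * α ^ 2 * β - 48 * α ^ 2 * γ + 8 * α * β ^ 3
      - 24 * α * β ^ 2 * γ - 72 * α * β * γ ^ 2 - 72 * α * γ ^ 3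
      + β ^ 5 - 3 * β ^ 4 * γ - 18 * β ^ 3 * γ ^ 2 - 18 * β ^ 2 * γ ^ 3
      + 405 * β * γ ^ 4 + 2025 * γ ^ 5 = 0 := by
    rcases mul_eq_zero.mp h6 with h | h
    · rcases mul_eq_zero.mp h with h | h
      · exact absurd h hα5
      · exact absurd h hγ
    · exact h
  -- linear relation in β, obtained by reducing hbig modulo h2
  have key36 : 36 * γ ^ 2 * (β * ((4 * α + β ^ 2) - 15 * γ ^ 2)
      - γ * ((4 * α + β ^ 2) + 45 * γ ^ 2)) = 0 := by
    linear_combination (β - 3 * γ) * h2 - hbig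
  have hγ2 : (36 : ℝ) * γ ^ 2 ≠ 0 := by positivity
  have hE2 : β * ((4 * α + β ^ 2) - 15 * γ ^ 2)
      = γ * ((4 * α + β ^ 2) + 45 * γ ^ 2) := by
    rcases mul_eq_zero.mp key36 with h | h
    · exact absurd h hγ2
    · linarith
  -- eliminate β using the squared relation
  have key2 : (β ^ 2 - (4 * α + β ^ 2) - 24 * γ ^ 2)
      * ((4 * α + β ^ 2) - 15 * γ ^ 2) ^ 2 = 0 := by
    linear_combination (β * ((4 * α + β ^ 2) - 15 * γ ^ 2)
      + γ * ((4 * α + β ^ 2) + 45 * γ ^ 2)) * hE2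
      + (25 * γ ^ 2 - (4 * α + β ^ 2)) * h2
  have hW : (4 * α + β ^ 2) - 15 * γ ^ 2 ≠ 0 := by
    intro h
    have h360 : (360 : ℝ) * γ ^ 4 = 0 := by
      linear_combination h2 - ((4 * α + β ^ 2) + 33 * γ ^ 2) * h
    have : γ ^ 4 = 0 := by linarith
    exact hγ (by nlinarith [sq_nonneg (γ ^ 2), sq_nonneg γ, this])
  rcases mul_eq_zero.mp key2 with h | h
  · nlinarith [sq_nonneg γ]
  · exact hW (pow_eq_zero_iff (by norm_num) |>.mp h)
end
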